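/- arXiv:2306.09419 — 3 statements merged into one kernel-verified Lean document; each statement's English description precedes it below -/
import Mathlib

section
/- The system of one-loop beta function equations β₁ = −ελ₁ + (13λ₁² )/(48π²) + (λ₁λ₂)/(8π²) + (λ₁λ₃)/(24π²) + λ₃²/(192π²) = 0, β₂ = −ελ₂ + (3λ₂²)/(16π²) + (λ₁λ₂)/(4π²) + λ₃²/(192π²) = 0, β₃ = −ελ₃ + λ₃²/(32π²) + (λ₂λ₃)/(8π²) + (λ₁λ₃)/(4π²) = 0 has exactly four real solutions (λ₁,λ₂,λ₃), namely (0,0,0), (48π²ε/13, 0, 0), (0, 16π²ε/3, 0), and (16π²ε/5, 16π²ε/15, 0), for any real ε > 0. -/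
open Real

/-- The one-loop beta function system of the `(ℤ₂)⁴:ℤ₅` Landau theory has exactly four real
solutions: `(0,0,0)`, `(48π²ε/13,0,0)`, `(0,16π²ε/3,0)`, `(16π²ε/5,16π²ε/15,0)`. -/
theorem stmt_9 (ε : ℝ) (hε : ε > 0) (l₁ l₂ l₃ : ℝ) :
    (-ε * l₁ + 13 * l₁ ^ 2 / (48 * π ^ 2) + l₁ * l₂ / (8 * π ^ 2)
        + l₁ * l₃ / (24 * π ^ 2) + l₃ ^ 2 / (192 * π ^ 2) = 0 ∧
     -ε * l₂ + 3 * l₂ ^ 2 / (16 * π ^ 2) + l₁ * l₂ / (4 * π ^ 2)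
        + l₃ ^ 2 / (192 * π ^ 2) = 0 ∧
     -ε * l₃ + l₃ ^ 2 / (32 * π ^ 2) + l₂ * l₃ / (8 * π ^ 2)
        + l₁ * l₃ / (4 * π ^ 2) = 0) ↔
    ((l₁, l₂, l₃) = (0, 0, 0) ∨
     (l₁, l₂, l₃) = (48 * π ^ 2 * ε / 13, 0, 0) ∨
     (l₁, l₂, l₃) = (0, 16 * π ^ 2 * ε / 3, 0) ∨
     (l₁, l₂, l₃) = (16 * π ^ 2 * ε / 5, 16 * π ^ 2 * ε / 15, 0)) := by
  have hπ : (π : ℝ) ≠ 0 := Real.pi_ne_zero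
  have hπ2 : (π : ℝ) ^ 2 > 0 := by positivity
  constructor
  · rintro ⟨h1, h2, h3⟩
    -- clear denominators
    have e1 : -(192 * π ^ 2 * ε) * l₁ + 52 * l₁ ^ 2 + 24 * l₁ * l₂
        + 8 * l₁ * l₃ + l₃ ^ 2 = 0 := by
      rw [show -(192 * π ^ 2 * ε) * l₁ + 52 * l₁ ^ 2 + 24 * l₁ * l₂
            + 8 * l₁ * l₃ + l₃ ^ 2
          = (192 * π ^ 2) * (-ε * l₁ + 13 * l₁ ^ 2 / (48 * π ^ 2) + l₁ * l₂ / (8 * π ^ 2)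
            + l₁ * l₃ / (24 * π ^ 2) + l₃ ^ 2 / (192 * π ^ 2)) from by field_simp; ring,
        h1, mul_zero]
    have e2 : -(192 * π ^ 2 * ε) * l₂ + 36 * l₂ ^ 2 + 48 * l₁ * l₂ + l₃ ^ 2 = 0 := by
      rw [show -(192 * π ^ 2 * ε) * l₂ + 36 * l₂ ^ 2 + 48 * l₁ * l₂ + l₃ ^ 2
          = (192 * π ^ 2) * (-ε * l₂ + 3 * l₂ ^ 2 / (16 * π ^ 2) + l₁ * l₂ / (4 * π ^ 2)
            + l₃ ^ 2 / (192 * π ^ 2)) from by field_simp; ring,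
        h2, mul_zero]
    have e3 : l₃ * (-(32 * π ^ 2 * ε) + l₃ + 4 * l₂ + 8 * l₁) = 0 := by
      rw [show l₃ * (-(32 * π ^ 2 * ε) + l₃ + 4 * l₂ + 8 * l₁)
          = (32 * π ^ 2) * (-ε * l₃ + l₃ ^ 2 / (32 * π ^ 2) + l₂ * l₃ / (8 * π ^ 2)
            + l₁ * l₃ / (4 * π ^ 2)) from by field_simp; ring,
        h3, mul_zero]
    rcases eq_or_ne l₃ 0 with h30 | h3ne
    · -- l₃ = 0
      subst h30
      have e1' : l₁ * (-(192 * π ^ 2 * ε) + 52 * l₁ + 24 * l₂) = 0 := by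
        linear_combination e1
      have e2' : l₂ * (-(192 * π ^ 2 * ε) + 36 * l₂ + 48 * l₁) = 0 := by
        linear_combination e2
      rcases mul_eq_zero.mp e1' with h10 | h1f <;>
        rcases mul_eq_zero.mp e2' with h20 | h2f
      · left; simp [h10, h20]
      · right; right; left
        have : l₂ = 16 * π ^ 2 * ε / 3 := by
          rw [h10] at h2f; linarith
        simp [h10, this]
      · right; left
        have : l₁ = 48 * π ^ 2 * ε / 13 := by
          rw [h20] at h1f; linarith
        simp [h20, this]
      · right; right; right
        have ha : l₁ = 16 * π ^ 2 * ε / 5 := by linarith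
        have hb : l₂ = 16 * π ^ 2 * ε / 15 := by linarith
        simp [ha, hb]
    · -- l₃ ≠ 0 : contradiction
      exfalso
      have hs : -(32 * π ^ 2 * ε) + l₃ + 4 * l₂ + 8 * l₁ = 0 :=
        (mul_eq_zero.mp e3).resolve_left h3ne
      have key : 4 * l₁ ^ 2 + 2 * l₁ * l₃ + l₃ ^ 2 = 0 := by
        linear_combination e1 - (6 * l₁) * hs
      have hl3 : l₃ ^ 2 > 0 := by positivity
      nlinarith [sq_nonneg (2 * l₁ + l₃ / 2), hl3]
  · rintro (h | h | h | h) <;>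
      (simp only [Prod.mk.injEq] at h; obtain ⟨ha, hb, hc⟩ := h;
       subst ha; subst hb; subst hc) <;>
      refine ⟨?_, ?_, ?_⟩ <;> (field_simp; try ring)
end

section
/- With λ₃ = 0, the one-loop beta functions β₁ = −ελ₁ + (13λ₁²)/(48π²) + (λ₁λ₂)/(8π²) and β₂ = −ελ₂ + (3λ₂²)/(16π²) + (λ₁λ₂)/(4π²) vanish simultaneously for real λ₁, λ₂ exactly at (0,0), (48π²ε/13, 0), (0, 16π²ε/3), and (16π²ε/5, 16π²ε/15). -/
open Real

/-! Clearing the positive denominators, the two beta functions factor as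
`λ₁ (13 λ₁ + 6 λ₂ - 3c)` and `λ₂ (4 λ₁ + 3 λ₂ - c)` with `c = 16π²ε`; the four fixed points are the
four ways of making one factor of each product vanish. -/

theorem quadratic_system_eq_zero_iff (c x y : ℝ) :
    (x * (13 * x + 6 * y - 3 * c) = 0 ∧ y * (4 * x + 3 * y - c) = 0) ↔
      ((x, y) = (0, 0) ∨ (x, y) = (3 * c / 13, 0) ∨ (x, y) = (0, c / 3) ∨
        (x, y) = (c / 5, c / 15)) := by
  simp only [Prod.mk.injEq, mul_eq_zero]
  constructor
  · rintro ⟨rfl | hx, rfl | hy⟩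
    · simp
    · right; right; left; constructor <;> linarith
    · right; left; constructor <;> linarith
    · right; right; right; constructor <;> linarith
  · rintro (⟨rfl, rfl⟩ | ⟨rfl, rfl⟩ | ⟨rfl, rfl⟩ | ⟨rfl, rfl⟩) <;> constructor <;> ring_nf <;> simp

theorem beta₁_eq_zero_iff {k : ℝ} (hk : k ≠ 0) (ε x y : ℝ) :
    -ε * x + 13 * x ^ 2 / (48 * k) + x * y / (8 * k) = 0 ↔
      x * (13 * x + 6 * y - 3 * (16 * k * ε)) = 0 := by
  have hfactor : -ε * x + 13 * x ^ 2 / (48 * k) + x * y / (8 * k) =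
      x * (13 * x + 6 * y - 3 * (16 * k * ε)) / (48 * k) := by
    field_simp
    ring
  rw [hfactor, div_eq_zero_iff]
  simp [hk]

theorem beta₂_eq_zero_iff {k : ℝ} (hk : k ≠ 0) (ε x y : ℝ) :
    -ε * y + 3 * y ^ 2 / (16 * k) + x * y / (4 * k) = 0 ↔
      y * (4 * x + 3 * y - 16 * k * ε) = 0 := by
  have hfactor : -ε * y + 3 * y ^ 2 / (16 * k) + x * y / (4 * k) =
      y * (4 * x + 3 * y - 16 * k * ε) / (16 * k) := by
    field_simp
    ring
  rw [hfactor, div_eq_zero_iff]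
  simp [hk]

theorem stmt_10_general (ε : ℝ) (l₁ l₂ : ℝ) :
    (-ε * l₁ + 13 * l₁ ^ 2 / (48 * π ^ 2) + l₁ * l₂ / (8 * π ^ 2) = 0 ∧
     -ε * l₂ + 3 * l₂ ^ 2 / (16 * π ^ 2) + l₁ * l₂ / (4 * π ^ 2) = 0) ↔
    ((l₁, l₂) = (0, 0) ∨
     (l₁, l₂) = (48 * π ^ 2 * ε / 13, 0) ∨
     (l₁, l₂) = (0, 16 * π ^ 2 * ε / 3) ∨
     (l₁, l₂) = (16 * π ^ 2 * ε / 5, 16 * π ^ 2 * ε / 15)) := by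
  have hπ : π ^ 2 ≠ 0 := pow_ne_zero 2 pi_ne_zero
  rw [beta₁_eq_zero_iff hπ, beta₂_eq_zero_iff hπ,
    show 48 * π ^ 2 * ε = 3 * (16 * π ^ 2 * ε) by ring]
  exact quadratic_system_eq_zero_iff _ l₁ l₂

/-- With `λ₃ = 0`, the one-loop beta functions of the Cubic(5) Landau theory vanish
simultaneously exactly at `(0,0)`, `(48π²ε/13,0)`, `(0,16π²ε/3)`, `(16π²ε/5,16π²ε/15)`. -/
theorem stmt_10 (ε : ℝ) (hε : ε > 0) (l₁ l₂ : ℝ) :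
    (-ε * l₁ + 13 * l₁ ^ 2 / (48 * π ^ 2) + l₁ * l₂ / (8 * π ^ 2) = 0 ∧
     -ε * l₂ + 3 * l₂ ^ 2 / (16 * π ^ 2) + l₁ * l₂ / (4 * π ^ 2) = 0) ↔
    ((l₁, l₂) = (0, 0) ∨
     (l₁, l₂) = (48 * π ^ 2 * ε / 13, 0) ∨
     (l₁, l₂) = (0, 16 * π ^ 2 * ε / 3) ∨
     (l₁, l₂) = (16 * π ^ 2 * ε / 5, 16 * π ^ 2 * ε / 15)) :=
  stmt_10_general ε l₁ l₂
end

section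
/- At the solution λ₁ = 48π²ε/13, λ₂ = λ₃ = 0 (the O(5) Wilson–Fisher point), the Jacobian ∂β_i/∂λ_j of the one-loop beta functions has eigenvalues ε, −ε/13, −ε/13. -/
open Real Polynomial

/-- The one-loop beta functions of the `(ℤ₂)⁴:ℤ₅` Landau theory. -/
noncomputable def beta (ε : ℝ) : Fin 3 → (Fin 3 → ℝ) → ℝ :=
  ![fun l => -ε * l 0 + 13 * l 0 ^ 2 / (48 * π ^ 2) + l 0 * l 1 / (8 * π ^ 2)
      + l 0 * l 2 / (24 * π ^ 2) + l 2 ^ 2 / (192 * π ^ 2),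
    fun l => -ε * l 1 + 3 * l 1 ^ 2 / (16 * π ^ 2) + l 0 * l 1 / (4 * π ^ 2)
      + l 2 ^ 2 / (192 * π ^ 2),
    fun l => -ε * l 2 + l 2 ^ 2 / (32 * π ^ 2) + l 1 * l 2 / (8 * π ^ 2)
      + l 0 * l 2 / (4 * π ^ 2)]

/-- The Jacobian matrix `∂βᵢ/∂λⱼ` of the beta functions at the point `p`. -/
noncomputable def jacobian (ε : ℝ) (p : Fin 3 → ℝ) : Matrix (Fin 3) (Fin 3) ℝ :=
  Matrix.of fun i j => fderiv ℝ (beta ε i) p (Pi.single j 1)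

/-!
Every `βᵢ` is a quadratic polynomial in the couplings, so its partial derivatives are computed
symbolically. At the Wilson–Fisher point `(48π²ε/13, 0, 0)` the entries of the Jacobian below the
diagonal carry a factor `λ₂` or `λ₃` and vanish, so the Jacobian is upper triangular and its
eigenvalues are its diagonal entries `-ε + 13λ₁/(24π²) = ε` and `-ε + λ₁/(4π²) = -ε/13` (twice).
-/

theorem fderiv_eval_apply {𝕜 ι : Type*} [NontriviallyNormedField 𝕜] [Fintype ι] (i : ι)
    (x v : ι → 𝕜) : fderiv 𝕜 (fun y : ι → 𝕜 => y i) x v = v i := by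
  rw [(hasFDerivAt_apply i x).fderiv]
  rfl

theorem jacobian_eq (ε : ℝ) (l : Fin 3 → ℝ) :
    jacobian ε l =
      !![-ε + 13 * l 0 / (24 * π ^ 2) + l 1 / (8 * π ^ 2) + l 2 / (24 * π ^ 2),
          l 0 / (8 * π ^ 2), l 0 / (24 * π ^ 2) + l 2 / (96 * π ^ 2);
        l 1 / (4 * π ^ 2), -ε + 3 * l 1 / (8 * π ^ 2) + l 0 / (4 * π ^ 2), l 2 / (96 * π ^ 2);
        l 2 / (4 * π ^ 2), l 2 / (8 * π ^ 2),
          -ε + l 2 / (16 * π ^ 2) + l 1 / (8 * π ^ 2) + l 0 / (4 * π ^ 2)] := by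
  ext i j
  fin_cases i <;> fin_cases j <;>
    simp (disch := fun_prop) only [jacobian, beta, Fin.reduceFinMk, Matrix.of_apply, Matrix.cons_val,
      div_eq_mul_inv, fderiv_fun_add, fderiv_fun_neg, fderiv_fun_mul, fderiv_fun_pow,
      fderiv_fun_const, fderiv_eval_apply, add_apply, neg_apply, smul_apply, Pi.zero_apply, zero_apply,
      Pi.single_apply, Fin.reduceEq, ↓reduceIte] <;>
    ring

theorem jacobian_wilsonFisher (ε : ℝ) :
    jacobian ε ![48 * π ^ 2 * ε / 13, 0, 0] =
      !![ε, 6 * ε / 13, 2 * ε / 13; 0, -ε / 13, 0; 0, 0, -ε / 13] := by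
  have hπ : π ≠ 0 := pi_ne_zero
  rw [jacobian_eq]
  ext i j
  fin_cases i <;> fin_cases j <;>
    simp only [Fin.reduceFinMk, Matrix.of_apply, Matrix.cons_val] <;> field_simp <;> ring

theorem Matrix.isUpperTriangular_fin_three {R : Type*} [Zero R] (a b c d e f : R) :
    (!![a, b, c; 0, d, e; 0, 0, f] : Matrix (Fin 3) (Fin 3) R).IsUpperTriangular := by
  intro i j hji
  fin_cases i <;> fin_cases j <;> simp_all

theorem stmt_12_general (ε : ℝ) :
    (jacobian ε ![48 * π ^ 2 * ε / 13, 0, 0]).charpoly =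
      (X - C ε) * (X - C (-ε / 13)) ^ 2 := by
  rw [jacobian_wilsonFisher,
    Matrix.charpoly_of_isUpperTriangular _ (Matrix.isUpperTriangular_fin_three ..),
    Fin.prod_univ_three]
  simp only [Matrix.of_apply, Matrix.cons_val]
  ring

/-- At the O(5) Wilson–Fisher point `λ₁ = 48π²ε/13`, `λ₂ = λ₃ = 0`, the Jacobian
`∂βᵢ/∂λⱼ` has eigenvalues `ε`, `−ε/13`, `−ε/13`: its characteristic polynomial is
`(X−ε)(X+ε/13)²`. -/
theorem stmt_12 (ε : ℝ) (hε : ε > 0) :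
    (jacobian ε ![48 * π ^ 2 * ε / 13, 0, 0]).charpoly =
      (X - C ε) * (X - C (-ε / 13)) ^ 2 :=
  stmt_12_general ε
end
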